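/- arXiv:2205.01485 — 2 statements merged into one kernel-verified Lean document; each statement's English description precedes it below -/
import Mathlib

section
/- Let h ≥ 2 and q = 2^{2h}. For all λ, μ ∈ F_q with μ ≠ 0, the polynomial f(X) = (λ + λ^{2^h}) + μX + μ^{2^h}X^{2^h} ∈ F_q[X] has at most 2 roots in the set U_{2^h+1} ∪ {0} ⊆ F_q. -/
/-- Let `h ≥ 2` and `q = 2^{2h}`.  For all `λ, μ ∈ F_q` with `μ ≠ 0`, the
polynomial `f(X) = (λ + λ^{2^h}) + μX + μ^{2^h}X^{2^h}` has at most `2` roots in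
`U_{2^h+1} ∪ {0} ⊆ F_q`. -/
theorem trace_poly_few_roots
    {F : Type*} [Field F] [Fintype F] [DecidableEq F]
    (h : ℕ) (hh : 2 ≤ h) (hq : Fintype.card F = 2 ^ (2 * h))
    (lam mu : F) (hmu : mu ≠ 0) :
    (Finset.univ.filter fun x : F =>
      (x ^ (2 ^ h + 1) = 1 ∨ x = 0) ∧
        (lam + lam ^ 2 ^ h) + mu * x + mu ^ 2 ^ h * x ^ 2 ^ h = 0).card ≤ 2 := by
  -- First establish characteristic 2
  obtain ⟨n, hn, hcard⟩ := FiniteField.card F (ringChar F)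
  have hdvd : ringChar F ∣ 2 ^ (2 * h) := by
    rw [← hq, hcard]; exact dvd_pow_self _ (by positivity)
  have hchar : ringChar F = 2 :=
    (Nat.prime_dvd_prime_iff_eq hn Nat.prime_two).mp (hn.dvd_of_dvd_pow hdvd)
  haveI : CharP F 2 := hchar ▸ ringChar.charP F
  set c : F := lam + lam ^ 2 ^ h with hc
  set S := (Finset.univ.filter fun x : F =>
      (x ^ (2 ^ h + 1) = 1 ∨ x = 0) ∧
        c + mu * x + mu ^ 2 ^ h * x ^ 2 ^ h = 0) with hS
  have addz : ∀ a b : F, a + b = 0 → a = b := by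
    intro a b hab
    rw [CharTwo.add_eq_iff_eq_add] at hab
    simpa using hab
  -- key: nonzero elements of S satisfy a quadratic
  have key : ∀ t ∈ S, t ≠ 0 → mu * t ^ 2 + c * t + mu ^ 2 ^ h = 0 := by
    intro t ht ht0
    rw [hS, Finset.mem_filter] at ht
    obtain ⟨-, hu, heq⟩ := ht
    have hu' : t ^ (2 ^ h + 1) = 1 := hu.resolve_right ht0
    calc mu * t ^ 2 + c * t + mu ^ 2 ^ h
        = (c + mu * t + mu ^ 2 ^ h * t ^ 2 ^ h) * t
          + mu ^ 2 ^ h * (1 - t ^ (2 ^ h + 1)) := by ring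
      _ = 0 := by rw [heq, hu', sub_self, mul_zero, zero_mul, zero_add]
  -- membership of 0 forces c = 0
  have zeroS : (0 : F) ∈ S → c = 0 := by
    intro h0
    rw [hS, Finset.mem_filter] at h0
    obtain ⟨-, -, heq⟩ := h0
    have hz : (0 : F) ^ 2 ^ h = 0 := zero_pow (by positivity)
    rwa [hz, mul_zero, mul_zero, add_zero, add_zero] at heq
  -- pairwise: two distinct nonzero elements of S give mu * (x + y) = c
  have pair : ∀ x ∈ S, ∀ y ∈ S, x ≠ 0 → y ≠ 0 → x ≠ y → mu * (x + y) = c := by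
    intro x hx y hy hx0 hy0 hxy
    have h1 := key x hx hx0
    have h2 := key y hy hy0
    have hsq : (x + y) ^ 2 = x ^ 2 + y ^ 2 := CharTwo.add_sq x y
    have hsum : (x + y) * (mu * (x + y) + c) = 0 := by
      have hmm : mu ^ 2 ^ h + mu ^ 2 ^ h = 0 := CharTwo.add_self_eq_zero _
      calc (x + y) * (mu * (x + y) + c)
          = mu * (x + y) ^ 2 + c * (x + y) := by ring
        _ = (mu * x ^ 2 + c * x + mu ^ 2 ^ h) + (mu * y ^ 2 + c * y + mu ^ 2 ^ h)
            - (mu ^ 2 ^ h + mu ^ 2 ^ h) := by rw [hsq]; ring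
        _ = 0 := by rw [h1, h2, hmm]; ring
    have hxy0 : x + y ≠ 0 := fun hcon => hxy (addz x y hcon)
    rcases mul_eq_zero.mp hsum with h' | h'
    · exact absurd h' hxy0
    · have := eq_neg_of_add_eq_zero_left h'
      rwa [CharTwo.neg_eq] at this
  -- now the counting argument
  by_contra hcon
  push_neg at hcon
  rw [Finset.two_lt_card] at hcon
  obtain ⟨x, hx, y, hy, z, hz, hxy, hxz, hyz⟩ := hcon
  -- helper to derive contradiction from two distinct nonzero elements when c = 0
  have czero : c = 0 → ∀ u ∈ S, ∀ v ∈ S, u ≠ 0 → v ≠ 0 → u = v := by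
    intro hc0 u hu v hv hu0 hv0
    by_contra huv
    have := pair u hu v hv hu0 hv0 huv
    rw [hc0, mul_eq_zero] at this
    rcases this with h' | h'
    · exact hmu h'
    · exact huv (addz u v h')
  by_cases hx0 : x = 0
  · subst hx0
    have hc0 := zeroS hx
    exact hyz (czero hc0 y hy z hz (fun hcon => hxy hcon.symm) (fun hcon => hxz hcon.symm))
  · by_cases hy0 : y = 0
    · subst hy0
      have hc0 := zeroS hy
      exact hxz (czero hc0 x hx z hz hx0 (fun hcon => hyz hcon.symm))
    · by_cases hz0 : z = 0
      · subst hz0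
        have hc0 := zeroS hz
        exact hxy (czero hc0 x hx y hy hx0 hy0)
      · have h1 := pair x hx y hy hx0 hy0 hxy
        have h2 := pair x hx z hz hx0 hz0 hxz
        have : mu * (x + y) = mu * (x + z) := h1.trans h2.symm
        have := mul_left_cancel₀ hmu this
        exact hyz (add_left_cancel this)
end

section
/- Let q = p^l with p prime, let h divide l with p^h ≥ 4 if p = 2 and p^h ≥ 5 otherwise, and assume p^h + 1 divides q − 1. Let z, t be integers with 0 ≤ t < z ≤ ⌊p^h/2⌋ − 1 and 2t ≥ max{0, 4z − p^h − 1}. Let n' ≥ 2 and a be integers satisfying one of: (1) n' | q−1 and a = z; (2) n'−1 | q−1 and a = z; (3) n'−1 | q−1, a = t, and, if p is odd, gcd(n', p^h) ≠ 1 or gcd(n', p^h+1) ≠ 1. Then there exists a linear code over F_{p^h} with parameters [(p^h+1)n', (n'−1)(2z+1)+2a+1, p^h+1−2a]_{p^h} that is an optimal (r,δ)-LRC with (r,δ) = (2z+1, p^h−2z+1). -/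
/-- The code `C ⊆ F^ι` has minimum Hamming distance exactly `d`. -/
def HasMinDist {F ι : Type*} [Field F] [DecidableEq F] [Fintype ι]
    (C : Submodule F (ι → F)) (d : ℕ) : Prop :=
  (∀ c ∈ C, c ≠ 0 → d ≤ hammingNorm c) ∧ ∃ c ∈ C, c ≠ 0 ∧ hammingNorm c = d

/-- The code `C ⊆ F^ι` is an `(r, δ)`-locally recoverable code: every coordinate `i` lies in a
set `R̄` of at most `r + δ - 1` coordinates such that the punctured code `C[R̄]` has minimum
Hamming distance at least `δ`. -/
def IsLRC {F ι : Type*} [Field F] [DecidableEq F] [DecidableEq ι] [Fintype ι]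
    (C : Submodule F (ι → F)) (r δ : ℕ) : Prop :=
  ∀ i : ι, ∃ R : Finset ι, i ∈ R ∧ R.card ≤ r + δ - 1 ∧
    ∀ c ∈ C, (∃ j ∈ R, c j ≠ 0) → δ ≤ (R.filter fun j => c j ≠ 0).card

/-- There exists a linear code over `F` of length `n`, dimension `k` and minimum distance `d`
which is an optimal `(r, δ)`-LRC, i.e. attaining the Singleton-like bound
`k + d + (⌈k/r⌉ - 1)(δ - 1) = n + 1`. -/
def IsOptimalLRCParams (F : Type*) [Field F] [DecidableEq F] (n k d r δ : ℕ) : Prop :=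
  ∃ C : Submodule F (Fin n → F),
    Module.finrank F C = k ∧ HasMinDist C d ∧ IsLRC C r δ ∧
      k + d + ((k + r - 1) / r - 1) * (δ - 1) = n + 1

/-!
Write `q = p ^ h` and let `γ` be a primitive `(q + 1)`-th root of unity over `K`. For `2m ≤ q`
the subfield subcode of the code with zeros `γ ^ j`, `j ∈ [m + 1, q - m]`, is MDS with parameters
`[q + 1, 2m + 1, q + 1 - 2m]`: the BCH bound gives the distance, and since Frobenius maps the zero
`γ ^ j` to `γ ^ (q + 1 - j)`, the defining set is Frobenius-stable, so the generator polynomial has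
coefficients in `K` and gives the dimension. Take these codes `A' ⊆ A` for `m = a` and `m = z`, and
let `C` consist of the words with `n'` blocks, each in `A`, whose block sum lies in `A'`. Then
`dim C = (n' - 1)(2z + 1) + 2a + 1`, every block is a repair group of size `q + 1 = r + δ - 1`
whose punctured code `A` has distance `δ = q + 1 - 2z`, and a nonzero word either has two nonzero
blocks, of total weight at least `2(q + 1 - 2z) ≥ q + 1 - 2a` (this is `2t ≥ 4z - q - 1`), or a
single one, which then lies in `A'`. These parameters attain the Singleton-like bound.
-/

open Finset

section Hamming

variable {K ι κ : Type*} [Field K] [DecidableEq K] [Fintype ι] [Fintype κ]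

lemma hammingNorm_funCongrLeft (e : κ ≃ ι) (x : ι → K) :
    hammingNorm (LinearEquiv.funCongrLeft K K e x) = hammingNorm x := by
  change hammingNorm (x ∘ e) = _
  simp only [hammingNorm, card_filter, Function.comp_apply]
  exact e.sum_comp fun i => if x i ≠ 0 then 1 else 0

lemma hammingNorm_eq_sum_hammingNorm_col (x : ι × κ → K) :
    hammingNorm x = ∑ b, hammingNorm fun i => x (i, b) := by
  simp only [hammingNorm, card_filter, Fintype.sum_prod_type_right]

lemma exists_mem_ne_zero_hammingNorm_le (W : Submodule K (ι → K)) {k : ℕ}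
    (hk : k < Module.finrank K W) (hkι : k ≤ Fintype.card ι) :
    ∃ c ∈ W, c ≠ 0 ∧ hammingNorm c ≤ Fintype.card ι - k := by
  classical
  obtain ⟨T, -, hT⟩ := exists_subset_card_eq (s := (univ : Finset ι)) (by simpa using hkι)
  -- restricting `W` to `k` coordinates loses dimension, so some codeword vanishes on them
  let restrict : W →ₗ[K] (T → K) := LinearMap.funLeft K K Subtype.val ∘ₗ W.subtype
  obtain ⟨w, hw, hw0⟩ : ∃ w ∈ LinearMap.ker restrict, w ≠ 0 := by
    refine Submodule.exists_mem_ne_zero_of_ne_bot fun hker => ?_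
    have := LinearMap.finrank_le_finrank_of_injective (LinearMap.ker_eq_bot.mp hker)
    simp [hT] at this
    omega
  refine ⟨w, w.2, by simpa using hw0, ?_⟩
  have hvanish : ∀ i ∈ T, (w : ι → K) i = 0 := fun i hi =>
    congrFun (LinearMap.mem_ker.mp hw) ⟨i, hi⟩
  calc hammingNorm (w : ι → K) ≤ Tᶜ.card :=
        card_le_card fun i hi => mem_compl.mpr fun hiT => (mem_filter.mp hi).2 (hvanish i hiT)
    _ = Fintype.card ι - k := by rw [card_compl, hT]

lemma finrank_le_of_le_hammingNorm (W : Submodule K (ι → K)) {d : ℕ}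
    (hd : ∀ c ∈ W, c ≠ 0 → d ≤ hammingNorm c) :
    Module.finrank K W ≤ Fintype.card ι + 1 - d := by
  by_contra! hlt
  obtain ⟨c, hc, hc0, hwt⟩ :=
    exists_mem_ne_zero_hammingNorm_le W (k := Fintype.card ι - (d - 1)) (by omega) (by omega)
  have := hd c hc hc0
  have := hammingNorm_pos_iff.mpr hc0
  omega

lemma hasMinDist_of_finrank_add_eq (W : Submodule K (ι → K)) {d : ℕ}
    (hd : ∀ c ∈ W, c ≠ 0 → d ≤ hammingNorm c) (hW : Module.finrank K W + d = Fintype.card ι + 1)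
    (hpos : 0 < Module.finrank K W) : HasMinDist W d := by
  obtain ⟨c, hc, hc0, hwt⟩ := exists_mem_ne_zero_hammingNorm_le W
    (k := Module.finrank K W - 1) (by omega) (by omega)
  exact ⟨hd, c, hc, hc0, le_antisymm (by omega) (hd c hc hc0)⟩

lemma HasMinDist.map_funCongrLeft {W : Submodule K (ι → K)} {d : ℕ} (h : HasMinDist W d)
    (e : κ ≃ ι) : HasMinDist (W.map (LinearEquiv.funCongrLeft K K e).toLinearMap) d := by
  obtain ⟨hlow, c, hc, hc0, hwt⟩ := h
  refine ⟨?_, _, Submodule.mem_map_of_mem hc, (LinearEquiv.map_ne_zero_iff _).mpr hc0, ?_⟩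
  · rintro _ ⟨c, hc, rfl⟩ hc0
    rw [LinearEquiv.coe_coe, hammingNorm_funCongrLeft]
    exact hlow c hc ((LinearEquiv.map_ne_zero_iff _).mp hc0)
  · rwa [LinearEquiv.coe_coe, hammingNorm_funCongrLeft]

lemma IsLRC.map_funCongrLeft [DecidableEq ι] [DecidableEq κ] {W : Submodule K (ι → K)}
    {r δ : ℕ} (h : IsLRC W r δ) (e : κ ≃ ι) :
    IsLRC (W.map (LinearEquiv.funCongrLeft K K e).toLinearMap) r δ := by
  intro k
  obtain ⟨R, hkR, hRcard, hR⟩ := h (e k)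
  refine ⟨R.map e.symm.toEmbedding, by simpa using hkR, by simpa using hRcard, ?_⟩
  rintro _ ⟨c, hc, rfl⟩ hne
  have hcol : ∀ j, (LinearEquiv.funCongrLeft K K e c) (e.symm j) = c j := by simp
  rw [filter_map, card_map]
  simp only [Function.comp_def, LinearEquiv.coe_coe, Equiv.coe_toEmbedding, hcol]
  refine hR c hc ?_
  obtain ⟨_, hjR, hcj⟩ := hne
  obtain ⟨j, hj, rfl⟩ := mem_map.mp hjR
  exact ⟨j, hj, by simpa [hcol] using hcj⟩

lemma isOptimalLRCParams_of_card_eq [DecidableEq ι] {W : Submodule K (ι → K)}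
    {n k d r δ : ℕ} (hn : Fintype.card ι = n) (hk : Module.finrank K W = k)
    (hd : HasMinDist W d) (hW : IsLRC W r δ)
    (hopt : k + d + ((k + r - 1) / r - 1) * (δ - 1) = n + 1) :
    IsOptimalLRCParams K n k d r δ := by
  let e := (Fintype.equivFinOfCardEq hn).symm
  exact ⟨W.map (LinearEquiv.funCongrLeft K K e).toLinearMap, by rw [LinearEquiv.finrank_map_eq, hk],
    hd.map_funCongrLeft e, hW.map_funCongrLeft e, hopt⟩

end Hamming

section BlockCode

variable {K ι β : Type*} [Field K]

def blockCode (A A' : Submodule K (ι → K)) (β : Type*) [Fintype β] :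
    Submodule K (ι × β → K) :=
  (⨅ b, A.comap (LinearMap.funLeft K K (·, b))) ⊓
    A'.comap (∑ b, LinearMap.funLeft K K (·, b))

variable {A A' : Submodule K (ι → K)}

lemma mem_blockCode [Fintype β] {c : ι × β → K} :
    c ∈ blockCode A A' β ↔ (∀ b, (fun i => c (i, b)) ∈ A) ∧ (∑ b, fun i => c (i, b)) ∈ A' := by
  simp [blockCode, Submodule.mem_iInf, LinearMap.funLeft, Function.comp_def]

def blockCodeOptionEquiv [Fintype β] (hA : A' ≤ A) :
    blockCode A A' (Option β) ≃ₗ[K] (β → A) × A' where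
  toFun c := (fun b => ⟨fun i => c.1 (i, some b), (mem_blockCode.mp c.2).1 (some b)⟩,
    ⟨∑ o, fun i => c.1 (i, o), (mem_blockCode.mp c.2).2⟩)
  map_add' c d := by ext <;> simp [sum_add_distrib]
  map_smul' a c := by ext <;> simp [smul_sum]
  invFun x := ⟨fun io => io.2.elim (x.2.1 io.1 - ∑ b, (x.1 b).1 io.1) fun b => (x.1 b).1 io.1, by
    refine mem_blockCode.mpr ⟨fun o => ?_, ?_⟩
    · cases o with
      | none =>
        exact A.sub_mem (hA x.2.2)
          (by simpa [← Finset.sum_apply] using A.sum_mem fun b _ => (x.1 b).2)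
      | some b => exact (x.1 b).2
    · convert x.2.2 using 1
      ext i
      simp [Fintype.sum_option]⟩
  left_inv c := by ext ⟨i, o⟩; cases o <;> simp [Fintype.sum_option]
  right_inv x := by ext <;> simp [Fintype.sum_option]

lemma finrank_blockCode_option [Fintype β] [FiniteDimensional K A] [FiniteDimensional K A']
    (hA : A' ≤ A) :
    Module.finrank K (blockCode A A' (Option β)) =
      Fintype.card β * Module.finrank K A + Module.finrank K A' := by
  rw [(blockCodeOptionEquiv hA).finrank_eq, Module.finrank_prod, Module.finrank_pi_fintype]
  simp

variable [DecidableEq K] [Fintype ι] [Fintype β]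

lemma le_hammingNorm_of_mem_blockCode {dA d : ℕ} (hdA : ∀ c ∈ A, c ≠ 0 → dA ≤ hammingNorm c)
    (hd : ∀ c ∈ A', c ≠ 0 → d ≤ hammingNorm c) (hdd : d ≤ 2 * dA) {c : ι × β → K}
    (hc : c ∈ blockCode A A' β) (hc0 : c ≠ 0) : d ≤ hammingNorm c := by
  classical
  let col : β → ι → K := fun b i => c (i, b)
  obtain ⟨hcol, hsum⟩ : (∀ b, col b ∈ A) ∧ ∑ b, col b ∈ A' := mem_blockCode.mp hc
  rw [hammingNorm_eq_sum_hammingNorm_col]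
  change d ≤ ∑ b, hammingNorm (col b)
  obtain ⟨b₀, hb₀⟩ : ∃ b, col b ≠ 0 := by
    by_contra! h
    exact hc0 (funext fun x => congrFun (h x.2) x.1)
  by_cases htwo : ∃ b, b ≠ b₀ ∧ col b ≠ 0
  · obtain ⟨b, hb, hb0⟩ := htwo
    calc d ≤ hammingNorm (col b₀) + hammingNorm (col b) := by
          have := hdA _ (hcol b₀) hb₀
          have := hdA _ (hcol b) hb0
          omega
      _ = ∑ x ∈ {b₀, b}, hammingNorm (col x) := by rw [sum_pair hb.symm]
      _ ≤ ∑ x, hammingNorm (col x) := sum_le_sum_of_subset (subset_univ _)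
  · -- a single nonzero block is the block sum, hence lies in `A'`
    push Not at htwo
    have hsingle : ∑ b, col b = col b₀ := sum_eq_single b₀ (fun b _ hb => htwo b hb) (by simp)
    calc d ≤ hammingNorm (col b₀) := hd _ (hsingle ▸ hsum) hb₀
      _ ≤ ∑ x, hammingNorm (col x) :=
        single_le_sum (f := fun x => hammingNorm (col x)) (fun _ _ => Nat.zero_le _) (mem_univ _)

lemma hasMinDist_blockCode [Nonempty β] {dA d : ℕ} (hA : A' ≤ A)
    (hdA : ∀ c ∈ A, c ≠ 0 → dA ≤ hammingNorm c) (hd : HasMinDist A' d) (hdd : d ≤ 2 * dA) :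
    HasMinDist (blockCode A A' β) d := by
  classical
  obtain ⟨hlow, w, hw, hw0, hwt⟩ := hd
  obtain ⟨b₀⟩ := ‹Nonempty β›
  let c : ι × β → K := fun x => if x.2 = b₀ then w x.1 else 0
  have hcol : ∀ b, (fun i => c (i, b)) = if b = b₀ then w else 0 := fun b => by
    split_ifs <;> ext <;> simp [c, *]
  have hsum : ∑ b, (fun i => c (i, b)) = w := by simp [hcol]
  refine ⟨fun c hc hc0 => le_hammingNorm_of_mem_blockCode hdA hlow hdd hc hc0, c, ?_, ?_, ?_⟩
  · refine mem_blockCode.mpr ⟨fun b => ?_, hsum ▸ hw⟩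
    rw [hcol]
    split_ifs
    exacts [hA hw, A.zero_mem]
  · exact fun hc0 => hw0 (funext fun i => by simpa [hc0] using (congrFun (hcol b₀) i).symm)
  · rw [hammingNorm_eq_sum_hammingNorm_col]
    simp [hcol, apply_ite hammingNorm, hwt]

lemma isLRC_blockCode [DecidableEq ι] [DecidableEq β] {r δ : ℕ}
    (hA : ∀ c ∈ A, c ≠ 0 → δ ≤ hammingNorm c) (hι : Fintype.card ι ≤ r + δ - 1) :
    IsLRC (blockCode A A' β) r δ := by
  rintro ⟨i, b⟩
  let block : ι ↪ ι × β := ⟨(·, b), fun _ _ h => (Prod.mk.inj h).1⟩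
  refine ⟨univ.map block, mem_map_of_mem _ (mem_univ i), by simpa using hι, ?_⟩
  rintro c hc ⟨_, hj, hcj⟩
  obtain ⟨j, -, rfl⟩ := mem_map.mp hj
  rw [filter_map, card_map]
  exact hA _ ((mem_blockCode.mp hc).1 b) fun h => hcj (congrFun h j)

end BlockCode

section CyclicCode

open Polynomial

variable {K L : Type*} [Field K] [Field L] [Algebra K L]

/-- Words `c` of length `n`, read as polynomials `∑ cᵢ Xⁱ`, that vanish at `γ ^ j` for `j ∈ D`. -/
def cyclicCode (γ : L) (n : ℕ) (D : Finset ℕ) : Submodule K (Fin n → K) where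
  carrier := {c | ∀ j ∈ D, ∑ i, algebraMap K L (c i) * (γ ^ j) ^ (i : ℕ) = 0}
  add_mem' hc hd j hj := by simp [add_mul, sum_add_distrib, hc j hj, hd j hj]
  zero_mem' := by simp
  smul_mem' a c hc j hj := by simp [mul_assoc, ← mul_sum, hc j hj]

lemma cyclicCode_anti {γ : L} {n : ℕ} {D D' : Finset ℕ} (h : D ⊆ D') :
    (cyclicCode γ n D' : Submodule K (Fin n → K)) ≤ cyclicCode γ n D :=
  fun _ hc j hj => hc j (h hj)

lemma le_hammingNorm_of_sum_mul_pow_eq_zero [DecidableEq L] {ι : Type*} [Fintype ι]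
    {x v : ι → L} (hx : Function.Injective x) {D : ℕ} (hv : ∀ k < D, ∑ i, v i * x i ^ k = 0)
    (hv0 : v ≠ 0) : D + 1 ≤ hammingNorm v := by
  by_contra! hlt
  set T := univ.filter (v · ≠ 0)
  let e : Fin T.card ≃ T := T.equivFin.symm
  -- the power sums over the support form an invertible Vandermonde system
  have hzero : (fun k => v (e k)) = 0 := by
    refine Matrix.eq_zero_of_forall_pow_sum_mul_pow_eq_zero (f := fun k => x (e k))
      (hx.comp (Subtype.val_injective.comp e.injective)) fun k => ?_
    rw [e.sum_comp fun i : T => v i * x i ^ (k : ℕ), sum_coe_sort T fun i => v i * x i ^ (k : ℕ),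
      sum_filter_of_ne fun i _ hi => left_ne_zero_of_mul hi]
    exact hv k (by have : T.card = hammingNorm v := rfl; omega)
  obtain ⟨i, hi⟩ := Function.ne_iff.mp hv0
  exact hi (by simpa [e] using congrFun hzero (e.symm ⟨i, mem_filter.mpr ⟨mem_univ i, hi⟩⟩))

/-- The BCH bound. -/
lemma le_hammingNorm_of_mem_cyclicCode [DecidableEq K] {γ : L} {n : ℕ}
    (hγ : IsPrimitiveRoot γ n) {D : Finset ℕ} {s δ : ℕ} (hD : ∀ k < δ, s + k ∈ D)
    {c : Fin n → K} (hc : c ∈ cyclicCode γ n D) (hc0 : c ≠ 0) : δ + 1 ≤ hammingNorm c := by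
  classical
  have hγ0 : γ ≠ 0 := hγ.ne_zero (by rintro rfl; exact hc0 (Subsingleton.elim _ _))
  have hweight :
      hammingNorm (fun i : Fin n => algebraMap K L (c i) * γ ^ (s * (i : ℕ))) = hammingNorm c :=
    hammingNorm_comp (fun (i : Fin n) y => algebraMap K L y * γ ^ (s * (i : ℕ)))
      (fun i => (mul_left_injective₀ (pow_ne_zero _ hγ0)).comp (algebraMap K L).injective)
      (fun i => by simp)
  rw [← hweight]
  refine le_hammingNorm_of_sum_mul_pow_eq_zero (x := fun i : Fin n => γ ^ (i : ℕ))
    (fun i j h => Fin.ext (hγ.pow_inj i.2 j.2 h)) (fun k hk => ?_) ?_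
  · rw [← hc _ (hD k hk)]
    refine sum_congr rfl fun i _ => ?_
    ring
  · rw [← hammingNorm_ne_zero_iff, hweight, hammingNorm_ne_zero_iff]
    exact hc0

lemma coeff_mem_cyclicCode {γ : L} {n : ℕ} {D : Finset ℕ} {P : K[X]} (hP : P.natDegree < n)
    (hroot : ∀ j ∈ D, (P.map (algebraMap K L)).eval (γ ^ j) = 0) :
    (fun i : Fin n => P.coeff i) ∈ cyclicCode γ n D := by
  intro j hj
  rw [← hroot j hj, eval_eq_sum_range' ((natDegree_map_le).trans_lt hP),
    ← Fin.sum_univ_eq_sum_range]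
  simp [coeff_map]

variable {q m : ℕ} {γ : L}

lemma le_hammingNorm_of_mem_cyclicCode_Icc [DecidableEq K] (hγ : IsPrimitiveRoot γ (q + 1))
    (hm : 2 * m ≤ q) :
    ∀ c ∈ (cyclicCode γ (q + 1) (Icc (m + 1) (q - m)) : Submodule K _), c ≠ 0 →
      q + 1 - 2 * m ≤ hammingNorm c := fun c hc hc0 => by
  have := le_hammingNorm_of_mem_cyclicCode hγ (s := m + 1) (δ := q - 2 * m)
    (fun k hk => mem_Icc.mpr (by omega)) hc hc0
  omega

variable [Fintype K]

lemma mem_range_algebraMap_of_pow_card_eq {x : L} (hx : x ^ Fintype.card K = x) :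
    x ∈ Set.range (algebraMap K L) := by
  have hq := Fintype.one_lt_card (α := K)
  have hroots : (X ^ Fintype.card K - X : K[X]).roots.map (algebraMap K L) =
      ((X ^ Fintype.card K - X : K[X]).map (algebraMap K L)).roots :=
    roots_map_of_injective_of_card_eq_natDegree (algebraMap K L).injective <| by
      rw [FiniteField.roots_X_pow_card_sub_X, FiniteField.X_pow_card_sub_X_natDegree_eq K hq]
      rfl
  have hxroot : x ∈ ((X ^ Fintype.card K - X : K[X]).map (algebraMap K L)).roots := by
    rw [mem_roots (by simpa using FiniteField.X_pow_card_sub_X_ne_zero L hq)]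
    simp [hx]
  rw [← hroots] at hxroot
  obtain ⟨y, -, rfl⟩ := Multiset.mem_map.mp hxroot
  exact ⟨y, rfl⟩

lemma exists_map_eq_prod_X_sub_C (S : Finset L) (hS : ∀ x ∈ S, x ^ Fintype.card K ∈ S) :
    ∃ g : K[X], g.map (algebraMap K L) = ∏ x ∈ S, (X - C x) := by
  classical
  let φ : L →+* L := FiniteField.frobeniusAlgHom K L
  have hφS : S.image φ = S :=
    eq_of_subset_of_card_le (image_subset_iff.mpr hS) (card_image_of_injective _ φ.injective).ge
  have hfix : (∏ x ∈ S, (X - C x)).map φ = ∏ x ∈ S, (X - C x) := by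
    conv_rhs => rw [← hφS, prod_image fun x _ y _ h => φ.injective h]
    simp [Polynomial.map_prod]
  refine (mem_lifts _).mp ((lifts_iff_coeff_lifts _).mpr fun n => ?_)
  exact mem_range_algebraMap_of_pow_card_eq (by simpa [φ] using congrArg (coeff · n) hfix)

lemma exists_generator_cyclicCode_Icc [DecidableEq L] (hq : Fintype.card K = q)
    (hγ : IsPrimitiveRoot γ (q + 1)) (m : ℕ) : ∃ g : K[X],
      g.map (algebraMap K L) = ∏ x ∈ (Icc (m + 1) (q - m)).image (γ ^ ·), (X - C x) := by
  refine exists_map_eq_prod_X_sub_C _ fun x hx => ?_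
  obtain ⟨j, hj, rfl⟩ := mem_image.mp hx
  rw [mem_Icc] at hj
  -- Frobenius acts on the zeros as `j ↦ q j ≡ q + 1 - j (mod q + 1)`
  refine mem_image.mpr ⟨q + 1 - j, mem_Icc.mpr (by omega), ?_⟩
  apply mul_right_cancel₀ (pow_ne_zero j (hγ.ne_zero (Nat.succ_ne_zero q)))
  rw [← pow_add, Nat.sub_add_cancel (by omega), hγ.pow_eq_one, hq, ← pow_succ, ← pow_mul,
    mul_comm, pow_mul, hγ.pow_eq_one, one_pow]

lemma le_finrank_cyclicCode_Icc (hq : Fintype.card K = q) (hγ : IsPrimitiveRoot γ (q + 1))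
    (hm : 2 * m ≤ q) :
    2 * m + 1 ≤ Module.finrank K (cyclicCode γ (q + 1) (Icc (m + 1) (q - m)) : Submodule K _) := by
  classical
  obtain ⟨g, hg⟩ := exists_generator_cyclicCode_Icc hq hγ m
  have hg0 : g ≠ 0 := by
    rintro rfl
    exact (monic_prod_of_monic _ _ fun x _ => monic_X_sub_C x).ne_zero (by simpa using hg.symm)
  have hgdeg : g.natDegree ≤ q - 2 * m := by
    rw [← natDegree_map (algebraMap K L), hg, natDegree_finsetProd_X_sub_C_eq_card]
    exact card_image_le.trans (by simp; omega)
  have hdeg (f : degreeLT K (2 * m + 1)) : (f * g : K[X]).natDegree < q + 1 := by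
    have hf : (f : K[X]).natDegree ≤ 2 * m := natDegree_le_iff_degree_le.mpr
      (mem_degreeLE.mp (degreeLT_succ_eq_degreeLE (R := K) ▸ f.2))
    exact natDegree_mul_le.trans_lt (by omega)
  -- codewords are the coefficient vectors of the multiples `f g` with `deg f ≤ 2 m`
  let Φ : degreeLT K (2 * m + 1) →ₗ[K] (Fin (q + 1) → K) :=
    LinearMap.pi (fun i => lcoeff K i) ∘ₗ LinearMap.mulRight K g ∘ₗ (degreeLT K _).subtype
  have hmem (f) : Φ f ∈ (cyclicCode γ (q + 1) (Icc (m + 1) (q - m)) : Submodule K _) := by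
    refine coeff_mem_cyclicCode (P := (f : K[X]) * g) (hdeg f) fun j hj => ?_
    rw [Polynomial.map_mul, hg, eval_mul, eval_prod, prod_eq_zero (mem_image_of_mem _ hj) (by simp),
      mul_zero]
  have hinj : Function.Injective (Φ.codRestrict _ hmem) := by
    refine (injective_iff_map_eq_zero _).mpr fun f hf => ?_
    have hfg : (f * g : K[X]) = 0 := Polynomial.ext fun i => by
      by_cases hi : i < q + 1
      · exact congrFun (congrArg Subtype.val hf) ⟨i, hi⟩
      · exact coeff_eq_zero_of_natDegree_lt (by have := hdeg f; omega)
    exact Subtype.ext ((mul_eq_zero.mp hfg).resolve_right hg0)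
  calc 2 * m + 1 = Module.finrank K (degreeLT K (2 * m + 1)) :=
        ((degreeLTEquiv K _).finrank_eq.trans (Module.finrank_fin_fun K)).symm
    _ ≤ _ := LinearMap.finrank_le_finrank_of_injective hinj

lemma finrank_cyclicCode_Icc [DecidableEq K] (hq : Fintype.card K = q)
    (hγ : IsPrimitiveRoot γ (q + 1)) (hm : 2 * m ≤ q) :
    Module.finrank K (cyclicCode γ (q + 1) (Icc (m + 1) (q - m)) : Submodule K _) = 2 * m + 1 := by
  refine le_antisymm ?_ (le_finrank_cyclicCode_Icc hq hγ hm)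
  have := finrank_le_of_le_hammingNorm _ (le_hammingNorm_of_mem_cyclicCode_Icc (K := K) hγ hm)
  simp only [Fintype.card_fin] at this
  omega

lemma hasMinDist_cyclicCode_Icc [DecidableEq K] (hq : Fintype.card K = q)
    (hγ : IsPrimitiveRoot γ (q + 1)) (hm : 2 * m ≤ q) :
    HasMinDist (cyclicCode γ (q + 1) (Icc (m + 1) (q - m)) : Submodule K _) (q + 1 - 2 * m) := by
  refine hasMinDist_of_finrank_add_eq _ (le_hammingNorm_of_mem_cyclicCode_Icc (K := K) hγ hm)
    ?_ ?_ <;> simp only [finrank_cyclicCode_Icc hq hγ hm, Fintype.card_fin] <;> omega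

end CyclicCode

lemma exists_isPrimitiveRoot_card_add_one (K : Type*) [Field K] [Fintype K] :
    ∃ γ : AlgebraicClosure K, IsPrimitiveRoot γ (Fintype.card K + 1) := by
  have : NeZero ((Fintype.card K + 1 : ℕ) : K) := ⟨by simp⟩
  exact HasEnoughRootsOfUnity.exists_primitiveRoot _ _

lemma lrc_singleton_bound_eq {q z a m : ℕ} (ha : a ≤ z) (hz : 2 * z ≤ q) :
    m * (2 * z + 1) + 2 * a + 1 + (q + 1 - 2 * a) +
      ((m * (2 * z + 1) + 2 * a + 1 + (2 * z + 1) - 1) / (2 * z + 1) - 1) * (q - 2 * z + 1 - 1) =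
      (q + 1) * (m + 1) + 1 := by
  -- the number of local groups `⌈k / r⌉` is `m + 1`
  have hceil : (m * (2 * z + 1) + 2 * a + 1 + (2 * z + 1) - 1) / (2 * z + 1) = m + 1 := by
    rw [Nat.sub_eq_of_eq_add (show _ = 2 * a + (2 * z + 1) * (m + 1) + 1 by ring),
      Nat.add_mul_div_left _ _ (by omega), Nat.div_eq_of_lt (by omega), zero_add]
  obtain ⟨s, rfl⟩ : ∃ s, q = 2 * z + s := ⟨q - 2 * z, by omega⟩
  rw [hceil, show 2 * z + s + 1 - 2 * a = 2 * (z - a) + s + 1 by omega,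
    show 2 * z + s - 2 * z + 1 - 1 = s by omega, Nat.add_sub_cancel]
  obtain ⟨u, rfl⟩ : ∃ u, z = a + u := ⟨z - a, by omega⟩
  rw [Nat.add_sub_cancel_left]
  ring

theorem new_optimal_lrc_bivariate_ph_plus_one_general
    {K : Type*} [Field K] [Fintype K] [DecidableEq K]
    (p l h : ℕ) (hK : Fintype.card K = p ^ h)
    (z t : ℕ) (htz : t < z) (hz : z ≤ p ^ h / 2 - 1) (ht : 4 * z - (p ^ h + 1) ≤ 2 * t)
    (n' a : ℕ) (hn' : 2 ≤ n')
    (hcase :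
      (n' ∣ p ^ l - 1 ∧ a = z) ∨
      (n' - 1 ∣ p ^ l - 1 ∧ a = z) ∨
      (n' - 1 ∣ p ^ l - 1 ∧ a = t ∧
        (Odd p → Nat.gcd n' (p ^ h) ≠ 1 ∨ Nat.gcd n' (p ^ h + 1) ≠ 1))) :
    IsOptimalLRCParams K ((p ^ h + 1) * n') ((n' - 1) * (2 * z + 1) + 2 * a + 1)
      (p ^ h + 1 - 2 * a) (2 * z + 1) (p ^ h - 2 * z + 1) := by
  obtain ⟨m, rfl⟩ : ∃ m, n' = m + 1 := ⟨n' - 1, by omega⟩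
  have hz2 : 2 * z ≤ p ^ h := by omega
  obtain ⟨haz, hdist⟩ : a ≤ z ∧ p ^ h + 1 - 2 * a ≤ 2 * (p ^ h - 2 * z + 1) := by
    rcases hcase with ⟨-, rfl⟩ | ⟨-, rfl⟩ | ⟨-, rfl, -⟩ <;> omega
  obtain ⟨γ, hγ⟩ := exists_isPrimitiveRoot_card_add_one K
  rw [hK] at hγ
  let A : Submodule K (Fin (p ^ h + 1) → K) := cyclicCode γ _ (Icc (z + 1) (p ^ h - z))
  let A' : Submodule K (Fin (p ^ h + 1) → K) := cyclicCode γ _ (Icc (a + 1) (p ^ h - a))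
  have hA : A' ≤ A := cyclicCode_anti (Icc_subset_Icc (by omega) (by omega))
  have hdistA : ∀ c ∈ A, c ≠ 0 → p ^ h - 2 * z + 1 ≤ hammingNorm c := fun c hc hc0 => by
    have := le_hammingNorm_of_mem_cyclicCode_Icc hγ hz2 c hc hc0
    omega
  refine isOptimalLRCParams_of_card_eq (W := blockCode A A' (Option (Fin m))) (by simp) ?_
    (hasMinDist_blockCode hA hdistA (hasMinDist_cyclicCode_Icc hK hγ (by omega)) hdist)
    (isLRC_blockCode hdistA (by simp; omega)) (by simpa using lrc_singleton_bound_eq haz hz2)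
  rw [finrank_blockCode_option hA, finrank_cyclicCode_Icc hK hγ hz2,
    finrank_cyclicCode_Icc hK hγ (by omega), Fintype.card_fin, Nat.add_sub_cancel]
  ring

/-- Parameters of new optimal `(r, δ)`-LRCs over `F_{p^h}` coming from
subfield-subcodes of bivariate monomial-Cartesian codes, first family
(`r + δ - 1 = p^h + 1`). -/
theorem new_optimal_lrc_bivariate_ph_plus_one
    {K : Type*} [Field K] [Fintype K] [DecidableEq K]
    (p l h : ℕ) (hp : p.Prime) (hhl : h ∣ l) (hK : Fintype.card K = p ^ h)
    (hph2 : p = 2 → 4 ≤ p ^ h) (hphodd : p ≠ 2 → 5 ≤ p ^ h)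
    (hdiv : p ^ h + 1 ∣ p ^ l - 1)
    (z t : ℕ) (htz : t < z) (hz : z ≤ p ^ h / 2 - 1) (ht : 4 * z - (p ^ h + 1) ≤ 2 * t)
    (n' a : ℕ) (hn' : 2 ≤ n')
    (hcase :
      (n' ∣ p ^ l - 1 ∧ a = z) ∨
      (n' - 1 ∣ p ^ l - 1 ∧ a = z) ∨
      (n' - 1 ∣ p ^ l - 1 ∧ a = t ∧
        (Odd p → Nat.gcd n' (p ^ h) ≠ 1 ∨ Nat.gcd n' (p ^ h + 1) ≠ 1))) :
    IsOptimalLRCParams K ((p ^ h + 1) * n') ((n' - 1) * (2 * z + 1) + 2 * a + 1)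
      (p ^ h + 1 - 2 * a) (2 * z + 1) (p ^ h - 2 * z + 1) :=
  new_optimal_lrc_bivariate_ph_plus_one_general p l h hK z t htz hz ht n' a hn' hcase
end
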